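/- Let T be a finite tree with h vertices and Wiener index W_T, and let T' be the subdivision tree of T, obtained by replacing every edge of T by a path through one new internal vertex. Then the Wiener index of T' is W(T') = 8·W_T − 2h(h − 1). -/

import Mathlib

set_option autoImplicit false

open Finset

/-- The two endpoints of an unordered pair, as a `Finset`. -/
def sym2Finset (e : Sym2 ℕ) : Finset ℕ :=
  Sym2.lift ⟨fun a b => {a, b}, fun a b => by ext x; simp [or_comm]⟩ e

/-- The vertex set of the graph on `ℕ` whose edge set is the finite set `E`. -/
def verts (E : Finset (Sym2 ℕ)) : Finset ℕ := E.biUnion sym2Finset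

/-- The Wiener index of the graph with edge set `E`: the sum of shortest-path
distances over all unordered pairs of vertices (here computed as half the sum
over ordered pairs). -/
noncomputable def wienerE (E : Finset (Sym2 ℕ)) : ℝ :=
  (∑ u ∈ verts E, ∑ v ∈ verts E,
    ((SimpleGraph.fromEdgeSet (↑E : Set (Sym2 ℕ))).dist u v : ℝ)) / 2

/-- `E` is the edge set of a (nonempty, loopless, acyclic, connected) tree. -/
def IsTreeEdges (E : Finset (Sym2 ℕ)) : Prop :=
  E.Nonempty ∧ (∀ e ∈ E, ¬ e.IsDiag) ∧
  (SimpleGraph.fromEdgeSet (↑E : Set (Sym2 ℕ))).IsAcyclic ∧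
  ∀ u ∈ verts E, ∀ v ∈ verts E,
    (SimpleGraph.fromEdgeSet (↑E : Set (Sym2 ℕ))).Reachable u v

/-- A base label strictly larger than every vertex label used in `E`. -/
def freshE (E : Finset (Sym2 ℕ)) : ℕ := (verts E).sup id + 1

/-- The `L` edges of a pendant path `root — f 0 — f 1 — ⋯ — f (L-1)`
consisting of `L` new vertices attached to `root`. -/
def pathEdges (root : ℕ) (f : ℕ → ℕ) (L : ℕ) : Finset (Sym2 ℕ) :=
  (Finset.range L).image (fun j => if j = 0 then s(root, f 0) else s(f (j-1), f j))

/-- The `m`-th order subdivision: every edge `uw` of `E` (taken with `u < w`) is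
replaced by a path from `u` to `w` through `m` new internal vertices, which get
fresh labels. -/
def subdivide (m : ℕ) (E : Finset (Sym2 ℕ)) : Finset (Sym2 ℕ) :=
  ((verts E) ×ˢ (verts E)).biUnion (fun uw =>
    if uw.1 < uw.2 ∧ s(uw.1, uw.2) ∈ E then
      pathEdges uw.1 (fun j => freshE E + Nat.pair (Nat.pair uw.1 uw.2) j) m
      ∪ {s(freshE E + Nat.pair (Nat.pair uw.1 uw.2) (m - 1), uw.2)}
    else ∅)

/-!
Write `d`, `d'` for distances in the tree `T` and in its subdivision `T'`, and `D x = ∑ᵥ d x v`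
(the transmission of `x`). Explicit walks, with a 1-Lipschitz potential for the lower bounds, give
`d' x y = 2 d x y` for original vertices and `d' x m = d x a + d x b` for the midpoint `m` of an
edge `ab` (in a tree `d x a` and `d x b` differ by exactly one). As `m` has no neighbours besides
`a` and `b`, also `2 d' m z = d' a z + d' b z` for every vertex `z ≠ m` of `T'`; when `z` is the
midpoint of another edge `cd` this needs `a` and `b` to be ordered alike by their distances to `c`
and to `d`, which holds because otherwise the walk `c → a → b → d` would avoid the bridge `cd`.
Sending each edge to its endpoint farther from `x` is a bijection onto `V \ {x}`, so
`∑_{ab} (d x a + d x b + 1) = 2 D x`. Hence in `T'` an original vertex has transmission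
`4 D x - (h - 1)` and a midpoint the mean of its two neighbours' minus one; summing over all
vertices of `T'` gives `W(T') = 8 W_T - 2h(h - 1)`.
-/

open SimpleGraph

namespace SimpleGraph

variable {V : Type*} {G : SimpleGraph V} {u v w : V}

theorem Walk.apply_le_apply_add_length (f : V → ℕ) (hf : ∀ a b, G.Adj a b → f b ≤ f a + 1)
    (p : G.Walk u v) : f v ≤ f u + p.length := by
  induction p with
  | nil => simp
  | cons h _ ih => have := hf _ _ h; rw [Walk.length_cons]; omega

theorem dist_eq_of_lipschitz (f : V → ℕ) (hf : ∀ a b, G.Adj a b → f b ≤ f a + 1)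
    (hu : f u = 0) (p : G.Walk u v) (hp : p.length = f v) : G.dist u v = f v := by
  refine le_antisymm (hp ▸ dist_le p) ?_
  obtain ⟨q, hq⟩ := p.reachable.exists_walk_length_eq_dist
  have := q.apply_le_apply_add_length f hf
  omega

theorem dist_eq_min_add_one_of_forall_adj {m a b : V} (hN : ∀ y, G.Adj m y → y = a ∨ y = b)
    (ha : G.Adj m a) (hb : G.Adj m b) (hz : w ≠ m) (hr : G.Reachable a w) :
    G.dist m w = min (G.dist a w) (G.dist b w) + 1 := by
  have hma : G.dist m w ≤ G.dist a w + 1 := by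
    simpa [dist_eq_one_iff_adj.mpr ha, add_comm] using ha.reachable.dist_triangle_left w
  have hmb : G.dist m w ≤ G.dist b w + 1 := by
    simpa [dist_eq_one_iff_adj.mpr hb, add_comm] using hb.reachable.dist_triangle_left w
  obtain ⟨p, hp⟩ := (ha.reachable.trans hr).exists_walk_length_eq_dist
  cases p with
  | nil => exact absurd rfl hz
  | cons h q =>
    have hq := dist_le q
    rw [Walk.length_cons] at hp
    rcases hN _ h with rfl | rfl <;> omega

theorem Walk.dist_lt_length_of_mem_support [DecidableEq V] (p : G.Walk u v) (hw : w ∈ p.support)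
    (hne : w ≠ v) : G.dist u w < p.length :=
  (dist_le _).trans_lt (p.length_takeUntil_lt_length hw hne)

theorem Reachable.exists_adj_dist_add_one (hr : G.Reachable u w) (hne : w ≠ u) :
    ∃ y, G.Adj y w ∧ G.dist u y + 1 = G.dist u w := by
  obtain ⟨p, hp⟩ := hr.exists_walk_length_eq_dist
  obtain ⟨y, h, q, hq⟩ := Walk.exists_eq_cons_of_ne hne p.reverse
  have hlen := congrArg Walk.length hq
  rw [Walk.length_reverse, Walk.length_cons] at hlen
  have h₁ := dist_le q.reverse
  have h₂ : G.dist u w ≤ G.dist u y + 1 := by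
    simpa [dist_eq_one_iff_adj.mpr h.symm] using q.reverse.reachable.dist_triangle_left w
  rw [Walk.length_reverse] at h₁
  exact ⟨y, h.symm, by omega⟩

namespace IsAcyclic

variable (hG : G.IsAcyclic)
include hG

theorem mk_mem_edges_of_adj (h : G.Adj v w) (p : G.Walk v w) : s(v, w) ∈ p.edges :=
  isBridge_iff_forall_walk_mem_edges.mp (isAcyclic_iff_forall_adj_isBridge.mp hG h) p

theorem eq_of_adj_of_dist_add_one {y₁ y₂ : V} (hr : G.Reachable u y₁) (h₁ : G.Adj y₁ w)
    (h₂ : G.Adj y₂ w) (hd₁ : G.dist u y₁ + 1 = G.dist u w) (hd₂ : G.dist u y₂ + 1 = G.dist u w) :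
    y₁ = y₂ := by
  classical
  have hr₂ : G.Reachable u y₂ := (hr.trans h₁.reachable).trans h₂.symm.reachable
  obtain ⟨p₁, hp₁⟩ := hr.exists_walk_length_eq_dist
  obtain ⟨p₂, hp₂⟩ := hr₂.exists_walk_length_eq_dist
  have := hG.mk_mem_edges_of_adj h₁ (p₁.reverse.append (p₂.concat h₂))
  simp only [Walk.edges_append, Walk.edges_reverse, Walk.edges_concat, List.concat_eq_append,
    List.mem_append, List.mem_reverse, List.mem_singleton] at this
  rcases this with h | h | h
  · have := p₁.dist_lt_length_of_mem_support (p₁.snd_mem_support_of_mem_edges h) h₁.ne'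
    omega
  · have := p₂.dist_lt_length_of_mem_support (p₂.snd_mem_support_of_mem_edges h) h₂.ne'
    omega
  · rcases Sym2.eq_iff.mp h with ⟨h, -⟩ | ⟨h, -⟩
    · exact h
    · exact absurd h h₁.ne

theorem dist_lt_dist_of_adj {a b c d : V} (hab : G.Adj a b) (hcd : G.Adj c d)
    (hne : s(a, b) ≠ s(c, d)) (hr : G.Reachable a c) (h : G.dist a c < G.dist b c) :
    G.dist a d < G.dist b d := by
  classical
  by_contra hd
  have hrd : G.Reachable d a := (hr.trans hcd.reachable).symm
  have hbd := hG.dist_eq_dist_add_one_of_adj_of_reachable d hab hrd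
  rw [dist_comm (u := d), dist_comm (u := d)] at hbd
  have hac := hcd.diff_dist_adj (u := a)
  have hbc := hcd.diff_dist_adj (u := b)
  obtain ⟨p, hp⟩ := hr.exists_walk_length_eq_dist
  obtain ⟨q, hq⟩ := (hab.symm.reachable.trans (hr.trans hcd.reachable)).exists_walk_length_eq_dist
  have := hG.mk_mem_edges_of_adj hcd (p.reverse.append (Walk.cons hab q))
  simp only [Walk.edges_append, Walk.edges_reverse, Walk.edges_cons, List.mem_append,
    List.mem_reverse, List.mem_cons] at this
  rcases this with h' | h' | h'
  · have := p.dist_lt_length_of_mem_support (p.snd_mem_support_of_mem_edges h') hcd.ne'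
    omega
  · exact hne h'.symm
  · have := q.dist_lt_length_of_mem_support (q.fst_mem_support_of_mem_edges h') hcd.ne
    omega

end IsAcyclic

end SimpleGraph

def graphOf (E : Finset (Sym2 ℕ)) : SimpleGraph ℕ := fromEdgeSet (↑E : Set (Sym2 ℕ))

noncomputable def transmissionE (E : Finset (Sym2 ℕ)) (x : ℕ) : ℕ :=
  ∑ z ∈ verts E, (graphOf E).dist x z

def sortedEdges (E : Finset (Sym2 ℕ)) : Finset (ℕ × ℕ) :=
  (verts E ×ˢ verts E).filter fun p => p.1 < p.2 ∧ s(p.1, p.2) ∈ E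

/-- The vertex that `subdivide 1 E` puts on the edge `s(p.1, p.2)` when `p.1 < p.2`. -/
def midVertex (E : Finset (Sym2 ℕ)) (p : ℕ × ℕ) : ℕ := freshE E + Nat.pair (Nat.pair p.1 p.2) 0

def midEnds (E : Finset (Sym2 ℕ)) (z : ℕ) : ℕ × ℕ := Nat.unpair (Nat.unpair (z - freshE E)).1

section Subdivision

variable {E : Finset (Sym2 ℕ)}

theorem mem_verts {v : ℕ} : v ∈ verts E ↔ ∃ w, s(v, w) ∈ E := by
  simp only [verts, Finset.mem_biUnion]
  constructor
  · rintro ⟨⟨a, b⟩, he, hv⟩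
    rcases (by simpa [sym2Finset] using hv : v = a ∨ v = b) with rfl | rfl
    · exact ⟨b, he⟩
    · exact ⟨a, Sym2.eq_swap ▸ he⟩
  · rintro ⟨w, he⟩
    exact ⟨_, he, by simp [sym2Finset]⟩

theorem mem_verts_of_mk_mem {a b : ℕ} (h : s(a, b) ∈ E) : a ∈ verts E ∧ b ∈ verts E :=
  ⟨mem_verts.mpr ⟨b, h⟩, mem_verts.mpr ⟨a, Sym2.eq_swap ▸ h⟩⟩

theorem lt_freshE {v : ℕ} (hv : v ∈ verts E) : v < freshE E :=
  Nat.lt_succ_of_le (Finset.le_sup (f := id) hv)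

theorem freshE_le_midVertex (p : ℕ × ℕ) : freshE E ≤ midVertex E p := Nat.le_add_right _ _

theorem midVertex_ne {v : ℕ} (hv : v ∈ verts E) (p : ℕ × ℕ) : midVertex E p ≠ v :=
  ((lt_freshE hv).trans_le (freshE_le_midVertex p)).ne'

theorem midVertex_injective : Function.Injective (midVertex E) := by
  intro p q h
  simpa [midVertex, Prod.ext_iff] using h

theorem midEnds_midVertex (p : ℕ × ℕ) : midEnds E (midVertex E p) = p := by
  simp [midEnds, midVertex]

theorem mem_sortedEdges {p : ℕ × ℕ} : p ∈ sortedEdges E ↔ p.1 < p.2 ∧ s(p.1, p.2) ∈ E := by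
  simp only [sortedEdges, Finset.mem_filter, Finset.mem_product, and_iff_right_iff_imp]
  exact fun h => mem_verts_of_mk_mem h.2

theorem mem_verts_of_mem_sortedEdges {p : ℕ × ℕ} (hp : p ∈ sortedEdges E) :
    p.1 ∈ verts E ∧ p.2 ∈ verts E :=
  mem_verts_of_mk_mem (mem_sortedEdges.mp hp).2

theorem eq_of_mem_sortedEdges_of_mk_eq {p q : ℕ × ℕ} (hp : p ∈ sortedEdges E)
    (hq : q ∈ sortedEdges E) (h : s(p.1, p.2) = s(q.1, q.2)) : p = q := by
  have := (mem_sortedEdges.mp hp).1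
  have := (mem_sortedEdges.mp hq).1
  rcases Sym2.eq_iff.mp h with ⟨h₁, h₂⟩ | ⟨h₁, h₂⟩
  · exact Prod.ext h₁ h₂
  · omega

theorem graphOf_adj_of_mem_sortedEdges {p : ℕ × ℕ} (hp : p ∈ sortedEdges E) :
    (graphOf E).Adj p.1 p.2 := by
  obtain ⟨hlt, he⟩ := mem_sortedEdges.mp hp
  exact (fromEdgeSet_adj _).mpr ⟨he, hlt.ne⟩

theorem mem_sortedEdges_of_adj {a b : ℕ} (h : (graphOf E).Adj a b) :
    (a, b) ∈ sortedEdges E ∨ (b, a) ∈ sortedEdges E := by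
  obtain ⟨he, hne⟩ := (fromEdgeSet_adj _).mp h
  simp only [mem_sortedEdges]
  rcases hne.lt_or_gt with hlt | hlt
  · exact Or.inl ⟨hlt, he⟩
  · exact Or.inr ⟨hlt, Sym2.eq_swap ▸ he⟩

theorem mem_subdivide_one {e : Sym2 ℕ} : e ∈ subdivide 1 E ↔ ∃ p ∈ sortedEdges E,
    e = s(p.1, midVertex E p) ∨ e = s(midVertex E p, p.2) := by
  simp only [subdivide, pathEdges, sortedEdges, midVertex, Finset.mem_biUnion, Finset.mem_product,
    Finset.mem_filter, Prod.exists]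
  refine exists₂_congr fun a b => ⟨fun ⟨hab, he⟩ => ?_, fun ⟨hab, he⟩ => ⟨hab.1, ?_⟩⟩
  · split_ifs at he with h
    · exact ⟨⟨hab, h⟩, by simpa using he⟩
    · simp at he
  · rw [if_pos hab.2]
    simpa using he

theorem subdivide_adj_iff {y z : ℕ} : (graphOf (subdivide 1 E)).Adj y z ↔ ∃ p ∈ sortedEdges E,
    s(y, z) = s(p.1, midVertex E p) ∨ s(y, z) = s(midVertex E p, p.2) := by
  rw [graphOf, fromEdgeSet_adj, Finset.mem_coe, mem_subdivide_one, and_iff_left_iff_imp]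
  rintro ⟨p, hp, h | h⟩ rfl <;> obtain ⟨h₁, h₂⟩ := mem_verts_of_mem_sortedEdges hp
  · exact midVertex_ne h₁ p (by rcases Sym2.eq_iff.mp h with h | h <;> omega)
  · exact midVertex_ne h₂ p (by rcases Sym2.eq_iff.mp h with h | h <;> omega)

theorem subdivide_adj_fst {p : ℕ × ℕ} (hp : p ∈ sortedEdges E) :
    (graphOf (subdivide 1 E)).Adj p.1 (midVertex E p) :=
  subdivide_adj_iff.mpr ⟨p, hp, Or.inl rfl⟩

theorem subdivide_adj_snd {p : ℕ × ℕ} (hp : p ∈ sortedEdges E) :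
    (graphOf (subdivide 1 E)).Adj (midVertex E p) p.2 :=
  subdivide_adj_iff.mpr ⟨p, hp, Or.inr rfl⟩

theorem eq_of_subdivide_adj_midVertex {p : ℕ × ℕ} {y : ℕ}
    (h : (graphOf (subdivide 1 E)).Adj (midVertex E p) y) : y = p.1 ∨ y = p.2 := by
  obtain ⟨q, hq, hpq⟩ := subdivide_adj_iff.mp h
  obtain ⟨h₁, h₂⟩ := mem_verts_of_mem_sortedEdges hq
  rcases hpq with hpq | hpq <;> rcases Sym2.eq_iff.mp hpq with ⟨h', rfl⟩ | ⟨h', rfl⟩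
  · exact absurd h' (midVertex_ne h₁ p)
  · exact Or.inl (by rw [midVertex_injective h'])
  · exact Or.inr (by rw [midVertex_injective h'])
  · exact absurd h' (midVertex_ne h₂ p)

theorem verts_subdivide_one (hE : ∀ e ∈ E, ¬ e.IsDiag) :
    verts (subdivide 1 E) = verts E ∪ (sortedEdges E).image (midVertex E) := by
  ext z
  simp only [Finset.mem_union, Finset.mem_image, mem_verts (E := subdivide 1 E), mem_subdivide_one]
  constructor
  · rintro ⟨w, p, hp, h | h⟩ <;> obtain ⟨h₁, h₂⟩ := mem_verts_of_mem_sortedEdges hp <;>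
      rcases Sym2.eq_iff.mp h with ⟨rfl, -⟩ | ⟨rfl, -⟩
    exacts [Or.inl h₁, Or.inr ⟨p, hp, rfl⟩, Or.inr ⟨p, hp, rfl⟩, Or.inl h₂]
  · rintro (hz | ⟨p, hp, rfl⟩)
    · obtain ⟨w, hw⟩ := mem_verts.mp hz
      have hadj : (graphOf E).Adj z w := (fromEdgeSet_adj _).mpr ⟨hw, fun h => hE _ hw (h ▸ rfl)⟩
      rcases mem_sortedEdges_of_adj hadj with hp | hp
      · exact ⟨_, _, hp, Or.inl rfl⟩
      · exact ⟨_, _, hp, Or.inr Sym2.eq_swap⟩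
    · exact ⟨_, p, hp, Or.inr rfl⟩

theorem sum_verts_subdivide_one (hE : ∀ e ∈ E, ¬ e.IsDiag) (f : ℕ → ℕ) :
    ∑ z ∈ verts (subdivide 1 E), f z =
      ∑ v ∈ verts E, f v + ∑ p ∈ sortedEdges E, f (midVertex E p) := by
  rw [verts_subdivide_one hE, Finset.sum_union, Finset.sum_image midVertex_injective.injOn]
  exact Finset.disjoint_left.mpr fun v hv hm => by
    obtain ⟨p, -, rfl⟩ := Finset.mem_image.mp hm
    exact midVertex_ne hv p rfl

end Subdivision

/-- For `x ∈ verts E`, the distance from `x` to `z` in the subdivision, written with distances in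
`E`; a label `z ≥ freshE E` is decoded as the midpoint `midVertex E (midEnds E z)`. -/
noncomputable def subdivDistFormula (E : Finset (Sym2 ℕ)) (x z : ℕ) : ℕ :=
  if freshE E ≤ z then
    2 * min ((graphOf E).dist x (midEnds E z).1) ((graphOf E).dist x (midEnds E z).2) + 1
  else 2 * (graphOf E).dist x z

section SubdivisionDist

variable {E : Finset (Sym2 ℕ)}

theorem subdivDistFormula_of_mem_verts (x : ℕ) {v : ℕ} (hv : v ∈ verts E) :
    subdivDistFormula E x v = 2 * (graphOf E).dist x v :=
  if_neg (lt_freshE hv).not_ge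

theorem subdivDistFormula_midVertex (x : ℕ) (p : ℕ × ℕ) :
    subdivDistFormula E x (midVertex E p) =
      2 * min ((graphOf E).dist x p.1) ((graphOf E).dist x p.2) + 1 := by
  rw [subdivDistFormula, if_pos (freshE_le_midVertex p), midEnds_midVertex]

theorem subdivDistFormula_le_of_adj (x : ℕ) :
    ∀ y z, (graphOf (subdivide 1 E)).Adj y z →
      subdivDistFormula E x z ≤ subdivDistFormula E x y + 1 := by
  intro y z h
  obtain ⟨p, hp, hyz⟩ := subdivide_adj_iff.mp h
  obtain ⟨h₁, h₂⟩ := mem_verts_of_mem_sortedEdges hp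
  have := (graphOf_adj_of_mem_sortedEdges hp).diff_dist_adj (u := x)
  rcases hyz with hyz | hyz <;> rcases Sym2.eq_iff.mp hyz with ⟨rfl, rfl⟩ | ⟨rfl, rfl⟩ <;>
    simp only [subdivDistFormula_midVertex, subdivDistFormula_of_mem_verts x h₁,
      subdivDistFormula_of_mem_verts x h₂] <;> omega

theorem exists_subdivide_walk {x y : ℕ} (p : (graphOf E).Walk x y) :
    ∃ q : (graphOf (subdivide 1 E)).Walk x y, q.length = 2 * p.length := by
  induction p with
  | nil => exact ⟨.nil, rfl⟩
  | cons h _ ih =>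
    obtain ⟨q, hq⟩ := ih
    rcases mem_sortedEdges_of_adj h with hp | hp
    · exact ⟨.cons (subdivide_adj_fst hp) (.cons (subdivide_adj_snd hp) q), by simp [hq]; ring⟩
    · exact ⟨.cons (subdivide_adj_snd hp).symm (.cons (subdivide_adj_fst hp).symm q),
        by simp [hq]; ring⟩

theorem subdivide_dist_of_mem_verts {x y : ℕ} (hx : x ∈ verts E) (hy : y ∈ verts E)
    (hr : (graphOf E).Reachable x y) :
    (graphOf (subdivide 1 E)).dist x y = 2 * (graphOf E).dist x y := by
  obtain ⟨p, hp⟩ := hr.exists_walk_length_eq_dist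
  obtain ⟨q, hq⟩ := exists_subdivide_walk p
  rw [← subdivDistFormula_of_mem_verts x hy]
  refine dist_eq_of_lipschitz _ (subdivDistFormula_le_of_adj x) ?_ q ?_
  · simp [subdivDistFormula_of_mem_verts x hx]
  · rw [hq, hp, subdivDistFormula_of_mem_verts x hy]

theorem subdivide_dist_midVertex {x : ℕ} {p : ℕ × ℕ} (hx : x ∈ verts E) (hp : p ∈ sortedEdges E)
    (hr : (graphOf E).Reachable x p.1) :
    (graphOf (subdivide 1 E)).dist x (midVertex E p) =
      2 * min ((graphOf E).dist x p.1) ((graphOf E).dist x p.2) + 1 := by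
  rw [← subdivDistFormula_midVertex]
  have hf := subdivDistFormula_le_of_adj (E := E) x
  have hx₀ : subdivDistFormula E x x = 0 := by simp [subdivDistFormula_of_mem_verts x hx]
  rcases le_total ((graphOf E).dist x p.1) ((graphOf E).dist x p.2) with hle | hle
  · obtain ⟨w, hw⟩ := hr.exists_walk_length_eq_dist
    obtain ⟨q, hq⟩ := exists_subdivide_walk w
    refine dist_eq_of_lipschitz _ hf hx₀ (q.concat (subdivide_adj_fst hp)) ?_
    rw [Walk.length_concat, hq, hw, subdivDistFormula_midVertex, min_eq_left hle]
  · obtain ⟨w, hw⟩ :=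
      (hr.trans (graphOf_adj_of_mem_sortedEdges hp).reachable).exists_walk_length_eq_dist
    obtain ⟨q, hq⟩ := exists_subdivide_walk w
    refine dist_eq_of_lipschitz _ hf hx₀ (q.concat (subdivide_adj_snd hp).symm) ?_
    rw [Walk.length_concat, hq, hw, subdivDistFormula_midVertex, min_eq_right hle]

theorem subdivide_dist_midVertex_midVertex {p q : ℕ × ℕ} (hp : p ∈ sortedEdges E)
    (hq : q ∈ sortedEdges E) (hpq : p ≠ q) (hr : (graphOf E).Reachable p.1 q.1) :
    (graphOf (subdivide 1 E)).dist (midVertex E p) (midVertex E q) =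
      min ((graphOf (subdivide 1 E)).dist p.1 (midVertex E q))
        ((graphOf (subdivide 1 E)).dist p.2 (midVertex E q)) + 1 := by
  have h₁ := (mem_verts_of_mem_sortedEdges hp).1
  refine dist_eq_min_add_one_of_forall_adj (fun _ => eq_of_subdivide_adj_midVertex)
    (subdivide_adj_fst hp).symm (subdivide_adj_snd hp) (midVertex_injective.ne hpq.symm)
    (Reachable.of_dist_ne_zero ?_)
  rw [subdivide_dist_midVertex h₁ hq hr]
  omega

end SubdivisionDist

noncomputable def nearEnd (E : Finset (Sym2 ℕ)) (x : ℕ) (p : ℕ × ℕ) : ℕ :=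
  if (graphOf E).dist x p.1 < (graphOf E).dist x p.2 then p.1 else p.2

noncomputable def farEnd (E : Finset (Sym2 ℕ)) (x : ℕ) (p : ℕ × ℕ) : ℕ :=
  if (graphOf E).dist x p.1 < (graphOf E).dist x p.2 then p.2 else p.1

namespace IsTreeEdges

variable {E : Finset (Sym2 ℕ)} (hT : IsTreeEdges E)
include hT

theorem not_isDiag : ∀ e ∈ E, ¬ e.IsDiag := hT.2.1

theorem isAcyclic : (graphOf E).IsAcyclic := hT.2.2.1

theorem reachable {x y : ℕ} (hx : x ∈ verts E) (hy : y ∈ verts E) : (graphOf E).Reachable x y :=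
  hT.2.2.2 x hx y hy

theorem dist_fst_snd {x : ℕ} {p : ℕ × ℕ} (hx : x ∈ verts E) (hp : p ∈ sortedEdges E) :
    (graphOf E).dist x p.1 = (graphOf E).dist x p.2 + 1 ∨
      (graphOf E).dist x p.2 = (graphOf E).dist x p.1 + 1 :=
  hT.isAcyclic.dist_eq_dist_add_one_of_adj_of_reachable x (graphOf_adj_of_mem_sortedEdges hp)
    (hT.reachable hx (mem_verts_of_mem_sortedEdges hp).1)

theorem dist_add_dist_of_ne {p q : ℕ × ℕ} (hp : p ∈ sortedEdges E) (hq : q ∈ sortedEdges E)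
    (hpq : p ≠ q) :
    (graphOf E).dist p.1 q.1 + (graphOf E).dist p.1 q.2 =
        (graphOf E).dist p.2 q.1 + (graphOf E).dist p.2 q.2 + 2 ∨
      (graphOf E).dist p.2 q.1 + (graphOf E).dist p.2 q.2 =
        (graphOf E).dist p.1 q.1 + (graphOf E).dist p.1 q.2 + 2 := by
  obtain ⟨hp₁, hp₂⟩ := mem_verts_of_mem_sortedEdges hp
  obtain ⟨hq₁, hq₂⟩ := mem_verts_of_mem_sortedEdges hq
  have hab := graphOf_adj_of_mem_sortedEdges hp
  have hcd := graphOf_adj_of_mem_sortedEdges hq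
  have hne : s(p.1, p.2) ≠ s(q.1, q.2) := fun h => hpq (eq_of_mem_sortedEdges_of_mk_eq hp hq h)
  have h₁ := hT.isAcyclic.dist_lt_dist_of_adj hab hcd hne (hT.reachable hp₁ hq₁)
  have h₂ := hT.isAcyclic.dist_lt_dist_of_adj hab.symm hcd (Sym2.eq_swap ▸ hne)
    (hT.reachable hp₂ hq₁)
  have c₁ := hT.dist_fst_snd hq₁ hp
  have c₂ := hT.dist_fst_snd hq₂ hp
  rw [dist_comm (u := q.1), dist_comm (u := q.1)] at c₁
  rw [dist_comm (u := q.2), dist_comm (u := q.2)] at c₂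
  omega

theorem nearEnd_farEnd {x : ℕ} {p : ℕ × ℕ} (hx : x ∈ verts E) (hp : p ∈ sortedEdges E) :
    (nearEnd E x p = p.1 ∧ farEnd E x p = p.2 ∨ nearEnd E x p = p.2 ∧ farEnd E x p = p.1) ∧
      (graphOf E).dist x (nearEnd E x p) + 1 = (graphOf E).dist x (farEnd E x p) := by
  unfold nearEnd farEnd
  rcases hT.dist_fst_snd hx hp with h | h <;> split_ifs <;> simp only [true_or, or_true,
    and_self, true_and] <;> omega

theorem adj_nearEnd_farEnd {x : ℕ} {p : ℕ × ℕ} (hx : x ∈ verts E) (hp : p ∈ sortedEdges E) :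
    (graphOf E).Adj (nearEnd E x p) (farEnd E x p) := by
  rcases (hT.nearEnd_farEnd hx hp).1 with ⟨h₁, h₂⟩ | ⟨h₁, h₂⟩ <;> rw [h₁, h₂]
  exacts [graphOf_adj_of_mem_sortedEdges hp, (graphOf_adj_of_mem_sortedEdges hp).symm]

theorem bijOn_farEnd {x : ℕ} (hx : x ∈ verts E) :
    Set.BijOn (farEnd E x) (sortedEdges E) ((verts E).erase x) := by
  refine ⟨fun p hp => ?_, fun p hp q hq hpq => ?_, fun w hw => ?_⟩
  · obtain ⟨h₁, h₂⟩ := mem_verts_of_mem_sortedEdges hp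
    obtain ⟨hends, hdist⟩ := hT.nearEnd_farEnd hx hp
    refine Finset.mem_erase.mpr ⟨fun h => by simp [h] at hdist, ?_⟩
    rcases hends with ⟨-, h⟩ | ⟨-, h⟩ <;> rw [h] <;> assumption
  · obtain ⟨hpe, hpd⟩ := hT.nearEnd_farEnd hx hp
    obtain ⟨hqe, hqd⟩ := hT.nearEnd_farEnd hx hq
    have hmem : nearEnd E x p ∈ verts E := by
      obtain ⟨h₁, h₂⟩ := mem_verts_of_mem_sortedEdges hp
      rcases hpe with ⟨h, -⟩ | ⟨h, -⟩ <;> rw [h] <;> assumption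
    have hadj := hT.adj_nearEnd_farEnd hx hq
    rw [← hpq] at hqd hadj
    have hnear := hT.isAcyclic.eq_of_adj_of_dist_add_one (hT.reachable hx hmem)
      (hT.adj_nearEnd_farEnd hx hp) hadj hpd hqd
    refine eq_of_mem_sortedEdges_of_mk_eq hp hq ?_
    rcases hpe with ⟨h₁, h₂⟩ | ⟨h₁, h₂⟩ <;> rcases hqe with ⟨h₃, h₄⟩ | ⟨h₃, h₄⟩ <;>
      rw [Sym2.eq_iff] <;> omega
  · obtain ⟨hwx, hw⟩ := Finset.mem_erase.mp (Finset.mem_coe.mp hw)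
    obtain ⟨y, hyw, hd⟩ := (hT.reachable hx hw).exists_adj_dist_add_one hwx
    rcases mem_sortedEdges_of_adj hyw with hp | hp
    · exact ⟨_, hp, if_pos (show (graphOf E).dist x y < (graphOf E).dist x w by omega)⟩
    · exact ⟨_, hp, if_neg (show ¬(graphOf E).dist x w < (graphOf E).dist x y by omega)⟩

theorem sum_dist_sortedEdges {x : ℕ} (hx : x ∈ verts E) :
    ∑ p ∈ sortedEdges E, ((graphOf E).dist x p.1 + (graphOf E).dist x p.2 + 1) =
      2 * transmissionE E x := by
  have hbij := hT.bijOn_farEnd hx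
  calc ∑ p ∈ sortedEdges E, ((graphOf E).dist x p.1 + (graphOf E).dist x p.2 + 1)
      = ∑ p ∈ sortedEdges E, 2 * (graphOf E).dist x (farEnd E x p) := by
        refine Finset.sum_congr rfl fun p hp => ?_
        obtain ⟨h | h, hd⟩ := hT.nearEnd_farEnd hx hp <;> rw [h.1, h.2] at hd <;> rw [h.2] <;>
          omega
    _ = 2 * ∑ v ∈ (verts E).erase x, (graphOf E).dist x v := by
        rw [← Finset.mul_sum]
        exact congrArg _ (Finset.sum_nbij _ (fun p hp => hbij.mapsTo hp) hbij.injOn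
          hbij.surjOn fun _ _ => rfl)
    _ = 2 * transmissionE E x := by
        rw [transmissionE, Finset.sum_erase _ dist_self]

theorem card_sortedEdges_add_one : (sortedEdges E).card + 1 = (verts E).card := by
  obtain ⟨⟨a, b⟩, he⟩ := hT.1
  have hx := (mem_verts_of_mk_mem he).1
  rw [(hT.bijOn_farEnd hx).finsetCard_eq, Finset.card_erase_add_one hx]

theorem subdivide_dist_midVertex_of_mem_verts {x : ℕ} {p : ℕ × ℕ} (hx : x ∈ verts E)
    (hp : p ∈ sortedEdges E) :
    (graphOf (subdivide 1 E)).dist x (midVertex E p) =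
      (graphOf E).dist x p.1 + (graphOf E).dist x p.2 := by
  have h₁ := (mem_verts_of_mem_sortedEdges hp).1
  rw [subdivide_dist_midVertex hx hp (hT.reachable hx h₁)]
  rcases hT.dist_fst_snd hx hp with h | h <;> omega

theorem transmissionE_subdivide_of_mem_verts {x : ℕ} (hx : x ∈ verts E) :
    transmissionE (subdivide 1 E) x + (sortedEdges E).card =
      4 * transmissionE E x := by
  have hsum := hT.sum_dist_sortedEdges hx
  rw [Finset.sum_add_distrib, Finset.sum_const, smul_eq_mul, mul_one] at hsum
  rw [transmissionE, sum_verts_subdivide_one hT.not_isDiag,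
    Finset.sum_congr rfl fun v hv => subdivide_dist_of_mem_verts hx hv (hT.reachable hx hv),
    Finset.sum_congr rfl fun p hp => hT.subdivide_dist_midVertex_of_mem_verts hx hp,
    ← Finset.mul_sum, ← transmissionE]
  omega

theorem two_mul_subdivide_dist_midVertex {p : ℕ × ℕ} (hp : p ∈ sortedEdges E) {z : ℕ}
    (hz : z ∈ verts (subdivide 1 E)) :
    2 * (graphOf (subdivide 1 E)).dist (midVertex E p) z + (if midVertex E p = z then 2 else 0) =
      (graphOf (subdivide 1 E)).dist p.1 z + (graphOf (subdivide 1 E)).dist p.2 z := by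
  obtain ⟨hp₁, hp₂⟩ := mem_verts_of_mem_sortedEdges hp
  rw [verts_subdivide_one hT.not_isDiag, Finset.mem_union, Finset.mem_image] at hz
  rcases hz with hv | ⟨q, hq, rfl⟩
  · rw [if_neg (midVertex_ne hv p), dist_comm, hT.subdivide_dist_midVertex_of_mem_verts hv hp,
      subdivide_dist_of_mem_verts hp₁ hv (hT.reachable hp₁ hv),
      subdivide_dist_of_mem_verts hp₂ hv (hT.reachable hp₂ hv),
      dist_comm (u := p.1), dist_comm (u := p.2)]
    ring
  obtain rfl | hpq := eq_or_ne p q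
  · rw [if_pos rfl, dist_self, dist_eq_one_iff_adj.mpr (subdivide_adj_fst hp),
      dist_eq_one_iff_adj.mpr (subdivide_adj_snd hp).symm]
  · obtain ⟨hq₁, -⟩ := mem_verts_of_mem_sortedEdges hq
    rw [if_neg (midVertex_injective.ne hpq),
      subdivide_dist_midVertex_midVertex hp hq hpq (hT.reachable hp₁ hq₁),
      hT.subdivide_dist_midVertex_of_mem_verts hp₁ hq,
      hT.subdivide_dist_midVertex_of_mem_verts hp₂ hq]
    rcases hT.dist_add_dist_of_ne hp hq hpq with h | h <;> omega

theorem transmissionE_subdivide_midVertex {p : ℕ × ℕ} (hp : p ∈ sortedEdges E) :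
    2 * transmissionE (subdivide 1 E) (midVertex E p) + 2 =
      transmissionE (subdivide 1 E) p.1 + transmissionE (subdivide 1 E) p.2 := by
  have hm : midVertex E p ∈ verts (subdivide 1 E) := by
    rw [verts_subdivide_one hT.not_isDiag]
    exact Finset.mem_union_right _ (Finset.mem_image_of_mem _ hp)
  have := Finset.sum_congr rfl fun z hz => hT.two_mul_subdivide_dist_midVertex hp hz
  rwa [Finset.sum_add_distrib, Finset.sum_ite_eq, if_pos hm, ← Finset.mul_sum,
    Finset.sum_add_distrib] at this

theorem sum_transmissionE_sortedEdges :
    ∑ p ∈ sortedEdges E, (transmissionE E p.1 + transmissionE E p.2) +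
        (verts E).card * (sortedEdges E).card =
      2 * ∑ v ∈ verts E, transmissionE E v := by
  have := Finset.sum_congr rfl fun v hv => hT.sum_dist_sortedEdges hv
  rw [← Finset.mul_sum, Finset.sum_comm] at this
  simp only [transmissionE, Finset.sum_add_distrib, Finset.sum_const, smul_eq_mul, mul_one] at this
  simp only [transmissionE, Finset.sum_add_distrib, dist_comm (u := (_ : ℕ × ℕ).1),
    dist_comm (u := (_ : ℕ × ℕ).2)]
  linarith

theorem sum_transmissionE_subdivide :
    ∑ z ∈ verts (subdivide 1 E), transmissionE (subdivide 1 E) z +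
        4 * (verts E).card * (sortedEdges E).card =
      8 * ∑ v ∈ verts E, transmissionE E v := by
  have hverts := Finset.sum_congr rfl fun x hx => hT.transmissionE_subdivide_of_mem_verts hx
  have hmid := Finset.sum_congr rfl fun p hp => hT.transmissionE_subdivide_midVertex hp
  have hends := Finset.sum_congr rfl fun p hp =>
    congrArg₂ (· + ·) (hT.transmissionE_subdivide_of_mem_verts (mem_verts_of_mem_sortedEdges hp).1)
      (hT.transmissionE_subdivide_of_mem_verts (mem_verts_of_mem_sortedEdges hp).2)
  have hedges := hT.sum_transmissionE_sortedEdges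
  simp only [Finset.sum_add_distrib, Finset.sum_const, smul_eq_mul, ← Finset.mul_sum]
    at hverts hmid hends hedges
  rw [sum_verts_subdivide_one hT.not_isDiag]
  rw [← hT.card_sortedEdges_add_one] at hverts hedges ⊢
  linarith

end IsTreeEdges

theorem wienerE_eq_sum_transmissionE (E : Finset (Sym2 ℕ)) :
    wienerE E = (∑ v ∈ verts E, transmissionE E v : ℕ) / 2 := by
  simp [wienerE, transmissionE, graphOf]

/-- Wiener index of the subdivision tree `T'` of a tree `T` with `h` vertices and
Wiener index `W_T`:  `W(T') = 8 W_T − 2h(h − 1)`. -/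
theorem wiener_subdivision_one (E₀ : Finset (Sym2 ℕ)) (hT : IsTreeEdges E₀)
    (h : ℕ) (hh : h = (verts E₀).card)
    (WT : ℝ) (hWT : WT = wienerE E₀) :
    wienerE (subdivide 1 E₀) = 8 * WT - 2 * (h : ℝ) * ((h : ℝ) - 1) := by
  subst hh hWT
  have hsum := congrArg (Nat.cast : ℕ → ℝ) hT.sum_transmissionE_subdivide
  have hcard := congrArg (Nat.cast : ℕ → ℝ) hT.card_sortedEdges_add_one
  push_cast at hsum hcard
  rw [wienerE_eq_sum_transmissionE, wienerE_eq_sum_transmissionE]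
  push_cast
  linear_combination hsum / 2 - 2 * ((verts E₀).card : ℝ) * hcard
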